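/- Let L be an odd positive integer and let G = (α β; γ δ) be a matrix with entries in ℤ_L satisfying αδ − βγ ≡ 1 (mod L), with β invertible mod L. Then the L×L complex matrix U_G = (1/√L) Σ_{u,v=0}^{L−1} τ^{β⁻¹(αv² − 2uv + δu²)} |u⟩⟨v|, where τ = −e^{iπ/L} and the exponent is computed modulo L, is unitary (i.e. U_G U_G* = I). -/

import Mathlib

open Complex Matrix

/-- `τ = -e^{iπ/L}`. -/
noncomputable def tauL (L : ℕ) : ℂ := -Complex.exp (Real.pi * Complex.I / L)

/-- The matrix `U_G = (1/√L) Σ_{u,v} τ^{β⁻¹(α v² − 2uv + δ u²)} |u⟩⟨v|` associated to a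
matrix `G = (α β; γ δ)` over `ℤ_L`; the exponent is computed modulo `L` (via `ZMod.val`). -/
noncomputable def UG (L : ℕ) (α β δ : ZMod L) : Matrix (Fin L) (Fin L) ℂ :=
  Matrix.of fun u v =>
    (1 / (Real.sqrt L : ℂ)) *
      tauL L ^
        (β⁻¹ *
            (α * ((v : ℕ) : ZMod L) ^ 2 -
              2 * ((u : ℕ) : ZMod L) * ((v : ℕ) : ZMod L) +
              δ * ((u : ℕ) : ZMod L) ^ 2)).val

lemma tauL_prim (L : ℕ) (hL : 0 < L) (hodd : Odd L) : IsPrimitiveRoot (tauL L) L := by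
  obtain ⟨m, hm⟩ := hodd
  have hLC : (L : ℂ) ≠ 0 := Nat.cast_ne_zero.mpr hL.ne'
  have h := Complex.isPrimitiveRoot_exp L hL.ne'
  have hcop : Nat.Coprime (m + 1) L := by
    have h1 : Nat.gcd (m + 1) L ∣ 2 * (m + 1) := (Nat.gcd_dvd_left _ _).mul_left 2
    have h2 := Nat.gcd_dvd_right (m + 1) L
    have h3 : Nat.gcd (m + 1) L ∣ 2 * (m + 1) - L := Nat.dvd_sub h1 h2
    have h4 : 2 * (m + 1) - L = 1 := by omega
    rw [h4] at h3
    exact Nat.dvd_one.mp h3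
  have hpow := h.pow_of_coprime (m + 1) hcop
  have key : Complex.exp (2 * Real.pi * Complex.I / L) ^ (m + 1) = tauL L := by
    rw [← Complex.exp_nat_mul]
    have hcast : ((m + 1 : ℕ) : ℂ) * (2 * Real.pi * Complex.I / L)
        = Real.pi * Complex.I + Real.pi * Complex.I / L := by
      have hLc : (L : ℂ) = 2 * m + 1 := by rw [hm]; push_cast; ring
      have hne : (2 * (m : ℂ) + 1) ≠ 0 := by rw [← hLc]; exact hLC
      field_simp [hLc]
      push_cast; linear_combination -hLc
    rw [hcast, Complex.exp_add, Complex.exp_pi_mul_I, tauL]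
    ring
  rwa [key] at hpow

lemma tauL_pow_mod (L : ℕ) (hL : 0 < L) (hodd : Odd L) (n : ℕ) :
    tauL L ^ (n % L) = tauL L ^ n := by
  conv_rhs => rw [← Nat.div_add_mod n L]
  rw [pow_add, pow_mul, (tauL_prim L hL hodd).pow_eq_one, one_pow, one_mul]

lemma tauL_val_add (L : ℕ) (hL : 0 < L) (hodd : Odd L) (a b : ZMod L) :
    tauL L ^ (a + b).val = tauL L ^ a.val * tauL L ^ b.val := by
  haveI : NeZero L := ⟨hL.ne'⟩
  rw [ZMod.val_add, tauL_pow_mod L hL hodd, pow_add]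

lemma conj_tauL (L : ℕ) : (starRingEnd ℂ) (tauL L) = (tauL L)⁻¹ := by
  rw [tauL, map_neg, ← Complex.exp_conj, map_div₀, _root_.map_mul, Complex.conj_ofReal,
    Complex.conj_I, Complex.conj_natCast,
    show (Real.pi : ℂ) * -Complex.I / L = -(Real.pi * Complex.I / L) by ring,
    Complex.exp_neg, inv_neg]

lemma conj_tauL_pow (L : ℕ) (hL : 0 < L) (hodd : Odd L) (y : ZMod L) :
    (starRingEnd ℂ) (tauL L ^ y.val) = tauL L ^ (-y).val := by
  haveI : NeZero L := ⟨hL.ne'⟩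
  rw [map_pow, conj_tauL, inv_pow]
  have h : tauL L ^ (-y).val * tauL L ^ y.val = 1 := by
    rw [← tauL_val_add L hL hodd, neg_add_cancel, ZMod.val_zero, pow_zero]
  exact (eq_inv_of_mul_eq_one_left h).symm

lemma sum_tauL_affine (L : ℕ) (hL : 0 < L) (hodd : Odd L) (c d : ZMod L) (hc : c ≠ 0) :
    ∑ v : Fin L, tauL L ^ (c * ((v : ℕ) : ZMod L) + d).val = 0 := by
  haveI : NeZero L := ⟨hL.ne'⟩
  have hprim := tauL_prim L hL hodd
  have hgen : ∀ n : ℕ, tauL L ^ (c * (n : ZMod L) + d).val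
      = (tauL L ^ c.val) ^ n * tauL L ^ d.val := by
    intro n
    induction n with
    | zero => simp
    | succ n ih =>
        have h1 : c * ((n + 1 : ℕ) : ZMod L) + d = (c * (n : ZMod L) + d) + c := by
          push_cast; ring
        rw [h1, tauL_val_add L hL hodd, ih, pow_succ]; ring
  calc ∑ v : Fin L, tauL L ^ (c * ((v : ℕ) : ZMod L) + d).val
      = ∑ v : Fin L, (tauL L ^ c.val) ^ (v : ℕ) * tauL L ^ d.val :=
        Finset.sum_congr rfl fun v _ => hgen v
    _ = (∑ i ∈ Finset.range L, (tauL L ^ c.val) ^ i) * tauL L ^ d.val := by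
        rw [Finset.sum_mul]
        exact Fin.sum_univ_eq_sum_range (fun i => (tauL L ^ c.val) ^ i * tauL L ^ d.val) L
    _ = 0 := by
        have hpos : 0 < c.val := Nat.pos_of_ne_zero (by simpa [ZMod.val_eq_zero] using hc)
        have hne : tauL L ^ c.val ≠ 1 := hprim.pow_ne_one_of_pos_of_lt hpos.ne' (ZMod.val_lt c)
        have hone : (tauL L ^ c.val) ^ L = 1 := by
          rw [← pow_mul, mul_comm, pow_mul, hprim.pow_eq_one, one_pow]
        rw [geom_sum_eq hne, hone, sub_self, zero_div, zero_mul]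

/-- For odd positive `L` and `G = (α β; γ δ)` over `ℤ_L` with `αδ − βγ ≡ 1 (mod L)` and `β`
invertible mod `L`, the matrix `U_G` is unitary: `U_G U_G* = I`. -/
theorem UG_unitary (L : ℕ) (hL : 0 < L) (hodd : Odd L) (α β γ δ : ZMod L)
    (hdet : α * δ - β * γ = 1) (hβ : IsUnit β) :
    UG L α β δ * (UG L α β δ)ᴴ = 1 := by
  haveI : NeZero L := ⟨hL.ne'⟩
  have hLC : (L : ℂ) ≠ 0 := Nat.cast_ne_zero.mpr hL.ne'
  set e : Fin L → Fin L → ZMod L := fun u v =>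
    β⁻¹ * (α * ((v : ℕ) : ZMod L) ^ 2 -
      2 * ((u : ℕ) : ZMod L) * ((v : ℕ) : ZMod L) + δ * ((u : ℕ) : ZMod L) ^ 2) with he
  have hsqrt : (1 / (Real.sqrt L : ℂ)) * (1 / (Real.sqrt L : ℂ)) = 1 / (L : ℂ) := by
    rw [div_mul_div_comm, one_mul, ← Complex.ofReal_mul,
      Real.mul_self_sqrt (Nat.cast_nonneg L)]
    norm_num
  ext u u'
  rw [Matrix.mul_apply, Matrix.one_apply]
  have hterm : ∀ v : Fin L, UG L α β δ u v * (UG L α β δ)ᴴ v u'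
      = (1 / (L : ℂ)) * tauL L ^ (e u v - e u' v).val := by
    intro v
    rw [Matrix.conjTranspose_apply, UG, Matrix.of_apply, Matrix.of_apply, star_mul']
    have h1 : star ((1 : ℂ) / (Real.sqrt L : ℂ)) = (1 : ℂ) / (Real.sqrt L : ℂ) := by
      rw [Complex.star_def, map_div₀, _root_.map_one, Complex.conj_ofReal]
    rw [h1]
    have h2 : star (tauL L ^ (e u' v).val) = tauL L ^ (-(e u' v)).val :=
      conj_tauL_pow L hL hodd (e u' v)
    rw [show (β⁻¹ * (α * ((v : ℕ) : ZMod L) ^ 2 -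
        2 * ((u' : ℕ) : ZMod L) * ((v : ℕ) : ZMod L) + δ * ((u' : ℕ) : ZMod L) ^ 2)) = e u' v
      from rfl, show (β⁻¹ * (α * ((v : ℕ) : ZMod L) ^ 2 -
        2 * ((u : ℕ) : ZMod L) * ((v : ℕ) : ZMod L) + δ * ((u : ℕ) : ZMod L) ^ 2)) = e u v
      from rfl, h2]
    rw [show (1 / (Real.sqrt L : ℂ)) * tauL L ^ (e u v).val *
        ((1 / (Real.sqrt L : ℂ)) * tauL L ^ (-(e u' v)).val)
      = ((1 / (Real.sqrt L : ℂ)) * (1 / (Real.sqrt L : ℂ))) *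
        (tauL L ^ (e u v).val * tauL L ^ (-(e u' v)).val) by ring,
      hsqrt, ← tauL_val_add L hL hodd, sub_eq_add_neg]
  rw [Finset.sum_congr rfl fun v _ => hterm v]
  by_cases huu : u = u'
  · subst huu
    simp only [sub_self, ZMod.val_zero, pow_zero, mul_one, if_pos rfl, ↓reduceIte]
    rw [Finset.sum_const, Finset.card_univ, Fintype.card_fin, nsmul_eq_mul]
    field_simp
  · rw [if_neg huu]
    set c : ZMod L := β⁻¹ * 2 * (((u' : ℕ) : ZMod L) - ((u : ℕ) : ZMod L)) with hcdef
    set d : ZMod L := β⁻¹ * δ * (((u : ℕ) : ZMod L) ^ 2 - ((u' : ℕ) : ZMod L) ^ 2) with hddef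
    have hrw : ∀ v : Fin L, e u v - e u' v = c * ((v : ℕ) : ZMod L) + d := by
      intro v; rw [he, hcdef, hddef]; ring
    have hc : c ≠ 0 := by
      intro h0
      have hβinv : IsUnit (β⁻¹ : ZMod L) :=
        IsUnit.of_mul_eq_one _ (ZMod.inv_mul_of_unit β hβ)
      have h2u : IsUnit (2 : ZMod L) := by
        have : Nat.Coprime 2 L := Nat.coprime_two_left.mpr hodd
        have := (ZMod.isUnit_iff_coprime 2 L).mpr this
        simpa using this
      have hunit : IsUnit (β⁻¹ * 2 : ZMod L) := hβinv.mul h2u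
      have hz : (((u' : ℕ) : ZMod L) - ((u : ℕ) : ZMod L)) = 0 :=
        (IsUnit.mul_right_eq_zero hunit).mp h0
      have heq : (((u' : ℕ) : ZMod L)) = ((u : ℕ) : ZMod L) := by
        rwa [sub_eq_zero] at hz
      apply huu
      have : (u : ℕ) = (u' : ℕ) := by
        have h1 := ZMod.val_cast_of_lt u.isLt
        have h2 := ZMod.val_cast_of_lt u'.isLt
        rw [← h1, ← h2, heq]
      exact (Fin.ext this).symm ▸ rfl
    rw [Finset.sum_congr rfl fun v _ => by rw [hrw v], ← Finset.mul_sum,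
      sum_tauL_affine L hL hodd c d hc, mul_zero]
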